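/- arXiv:math/0509429 — 5 statements merged into one kernel-verified Lean document; each statement's English description precedes it below -/
import Mathlib

section
/- Suppose Δ = {x ∈ (ℝ^n)^* : ⟨x,u_i⟩ ≥ λ_i, i=1,…,p} is bounded (a polytope). Then the map J_A := ι^* ∘ J_G : ℂ^p → L_ℝ^*, where J_G(z) = (1/2)(|z_1|²,…,|z_p|²) + λ and ι^* is restriction to L_ℝ = ker π, is a proper map: preimages of compact sets are compact. -/
/-!
Since `Δ` is bounded and nonempty, no nonzero functional `f` has `f (u i) ≥ 0` for all `i`: its
ray from a point of `Δ` would stay in `Δ`. Compactness of the unit sphere makes this quantitative,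
`f (u i) ≤ -ε ‖f‖` for some `i`, and separating `0` from the convex hull of the slightly shifted
vectors `u i + δ ∑ⱼ u j` yields Stiemke's alternative: some `y ∈ L` with all `y i > 0`. Pairing
`J_G(z)` with this single `y` bounds `∑ y i |z i|²`, hence every `|z i|`, on the preimage of a ball.
-/

open Bornology Metric

lemma eq_zero_of_isBounded_of_forall_add_smul_mem {F : Type*} [NormedAddCommGroup F]
    [NormedSpace ℝ F] {A : Set F} (hA : IsBounded A) {x d : F}
    (h : ∀ t : ℝ, 0 ≤ t → x + t • d ∈ A) : d = 0 := by
  obtain ⟨R, hR⟩ := hA.exists_norm_le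
  by_contra hd
  have hd_pos : 0 < ‖d‖ := norm_pos_iff.2 hd
  have hxR : ‖x‖ ≤ R := hR x (by simpa using h 0 le_rfl)
  set t := (R + ‖x‖ + 1) / ‖d‖
  have ht : 0 ≤ t := div_nonneg (by linarith [norm_nonneg x]) hd_pos.le
  have hnorm : ‖t • d‖ = R + ‖x‖ + 1 := by
    rw [norm_smul, Real.norm_of_nonneg ht, div_mul_cancel₀ _ hd_pos.ne']
  have htri := norm_sub_le (x + t • d) x
  rw [add_sub_cancel_left] at htri
  linarith [hR _ (h t ht)]

section StiemkeAlternative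

variable {E : Type*} [NormedAddCommGroup E] [NormedSpace ℝ E] [FiniteDimensional ℝ E]
  {ι : Type*} [Fintype ι] {u : ι → E}

lemma exists_pos_forall_exists_apply_le_neg_mul_norm [Nonempty ι]
    (hu : ∀ f : StrongDual ℝ E, (∀ i, 0 ≤ f (u i)) → f = 0) :
    ∃ ε > 0, ∀ f : StrongDual ℝ E, ∃ i, f (u i) ≤ -ε * ‖f‖ := by
  set g : StrongDual ℝ E → ℝ := fun f => Finset.univ.sup' Finset.univ_nonempty fun i => -f (u i)
  have hg : Continuous g := Continuous.finset_sup'_apply _ fun i _ => by fun_prop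
  have hg_pos : ∀ f ∈ sphere (0 : StrongDual ℝ E) 1, 0 < g f := by
    intro f hf
    by_contra! hle
    have hf0 : f = 0 := hu f fun i => by
      simpa using (Finset.sup'_le_iff _ _).1 hle i (Finset.mem_univ i)
    simp [hf0] at hf
  obtain ⟨ε, hε, hεg⟩ := (isCompact_sphere 0 1).exists_forall_le' hg.continuousOn hg_pos
  refine ⟨ε, hε, fun f => ?_⟩
  rcases eq_or_ne f 0 with rfl | hf
  · exact ⟨Classical.arbitrary ι, by simp⟩
  have hf_pos : 0 < ‖f‖ := norm_pos_iff.2 hf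
  have hunit : ‖f‖⁻¹ • f ∈ sphere (0 : StrongDual ℝ E) 1 := by
    simp [norm_smul, hf_pos.ne']
  obtain ⟨i, -, hi⟩ := (Finset.le_sup'_iff _).1 (hεg _ hunit)
  refine ⟨i, ?_⟩
  rw [smul_apply, smul_eq_mul, le_neg, inv_mul_le_iff₀ hf_pos] at hi
  linarith

theorem exists_pos_sum_smul_eq_zero
    (hu : ∀ f : StrongDual ℝ E, (∀ i, 0 ≤ f (u i)) → f = 0) :
    ∃ y : ι → ℝ, (∀ i, 0 < y i) ∧ ∑ i, y i • u i = 0 := by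
  cases isEmpty_or_nonempty ι
  · exact ⟨0, isEmptyElim, by simp⟩
  classical
  obtain ⟨ε, hε, hεu⟩ := exists_pos_forall_exists_apply_le_neg_mul_norm hu
  set s := ∑ i, u i
  set δ := ε / (‖s‖ + 1)
  have hδ : 0 < δ := by positivity
  have hδs : δ * ‖s‖ ≤ ε := by
    rw [div_mul_eq_mul_div, div_le_iff₀ (by positivity)]
    nlinarith [norm_nonneg s]
  set T := Fintype.linearCombination ℝ fun i => u i + δ • s
  -- A functional separating `0` from this image would violate the margin `ε`, since `δ‖s‖ ≤ ε`.
  have h0 : (0 : E) ∈ T '' stdSimplex ℝ ι := by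
    by_contra h0
    have hK := (isCompact_stdSimplex ℝ ι).image T.continuous_of_finiteDimensional
    obtain ⟨f, c, hfc, hc⟩ :=
      geometric_hahn_banach_point_closed ((convex_stdSimplex ℝ ι).linear_image T) hK.isClosed h0
    obtain ⟨i, hi⟩ := hεu f
    have hTi : T (Pi.single i 1) = u i + δ • s := by
      simp [T, Fintype.linearCombination_apply_single]
    have hfi := hc _ ⟨_, single_mem_stdSimplex ℝ i, rfl⟩
    rw [hTi, map_add, map_smul, smul_eq_mul] at hfi
    rw [map_zero] at hfc
    have hfs : f s ≤ ‖f‖ * ‖s‖ := (le_abs_self _).trans (f.le_opNorm s)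
    nlinarith [norm_nonneg f]
  obtain ⟨w, hw, hTw⟩ := h0
  refine ⟨fun i => w i + δ, fun i => by linarith [hw.1 i], ?_⟩
  calc ∑ i, (w i + δ) • u i = ∑ i, w i • u i + δ • s := by
        simp only [add_smul, Finset.sum_add_distrib, s, Finset.smul_sum]
    _ = T w := by
        simp only [T, Fintype.linearCombination_apply, smul_add, Finset.sum_add_distrib,
          ← Finset.sum_smul, hw.2, one_smul]
    _ = 0 := hTw

end StiemkeAlternative

lemma eq_zero_of_forall_nonneg_of_isBounded {ι κ : Type*} [Fintype κ] {u : ι → κ → ℝ}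
    {lam : ι → ℝ} (hbdd : IsBounded {x : κ → ℝ | ∀ i, lam i ≤ ∑ j, x j * u i j})
    (hne : {x : κ → ℝ | ∀ i, lam i ≤ ∑ j, x j * u i j}.Nonempty)
    (f : StrongDual ℝ (κ → ℝ)) (hf : ∀ i, 0 ≤ f (u i)) : f = 0 := by
  classical
  set d : κ → ℝ := fun j => f (Pi.single j 1)
  have hfd : ∀ v, f v = ∑ j, v j * d j := fun v => by
    conv_lhs => rw [pi_eq_sum_univ' v]
    simp [d]
  obtain ⟨x, hx⟩ := hne
  have hd : d = 0 := eq_zero_of_isBounded_of_forall_add_smul_mem hbdd (x := x) fun t ht i => by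
    have hshift : ∑ j, (x + t • d) j * u i j = ∑ j, x j * u i j + t * f (u i) := by
      simp only [hfd, Pi.add_apply, Pi.smul_apply, smul_eq_mul, Finset.mul_sum,
        ← Finset.sum_add_distrib]
      exact Finset.sum_congr rfl fun j _ => by ring
    rw [hshift]
    nlinarith [hx i, hf i]
  ext v
  simp [hfd, hd]

lemma isBounded_setOf_sum_mul_norm_sq_le {ι F : Type*} [Fintype ι] [SeminormedAddCommGroup F]
    {y : ι → ℝ} (hy : ∀ i, 0 < y i) (c : ℝ) :
    IsBounded {z : ι → F | ∑ i, y i * ‖z i‖ ^ 2 ≤ c} := by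
  refine forall_isBounded_image_eval_iff.1 fun i =>
    (isBounded_closedBall (x := 0) (r := √(c / y i))).subset ?_
  rintro _ ⟨z, hz, rfl⟩
  have hzi : y i * ‖z i‖ ^ 2 ≤ c :=
    (Finset.single_le_sum (f := fun j => y j * ‖z j‖ ^ 2) (fun j _ => by have := hy j; positivity)
      (Finset.mem_univ i)).trans hz
  rw [mem_closedBall_zero_iff]
  exact Real.le_sqrt_of_sq_le (by rwa [le_div_iff₀' (hy i)])

/-- Properness of `J_A`: Suppose the polytope
`Δ = {x ∈ (ℝ^n)^* : ⟨x,u_i⟩ ≥ λ_i}` is bounded (and nonempty, being a polytope).  Then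
`J_A = ι^* ∘ J_G : ℂ^p → L_ℝ^*` is proper, where `J_G(z) = (1/2)(|z_1|²,…,|z_p|²) + λ`
and `ι^*` is restriction of functionals to `L_ℝ = ker π`.  Properness is expressed by
compactness of the preimage of every closed ball of the dual space `L_ℝ^*`:
`{z : ‖J_A(z)‖ ≤ r}` is compact for every `r`. -/
theorem JA_proper
    {p n : ℕ} (u : Fin p → (Fin n → ℝ)) (lam : Fin p → ℝ)
    (hbdd : Bornology.IsBounded {x : Fin n → ℝ | ∀ i, lam i ≤ ∑ j, x j * u i j})
    (hne : {x : Fin n → ℝ | ∀ i, lam i ≤ ∑ j, x j * u i j}.Nonempty)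
    (L : Submodule ℝ (Fin p → ℝ))
    (hL : ∀ v, v ∈ L ↔ ∑ i, v i • u i = 0) :
    ∀ r : ℝ, IsCompact {z : Fin p → ℂ |
      ∀ v ∈ L, |∑ i, ((1 / 2 : ℝ) * ‖z i‖ ^ 2 + lam i) * v i| ≤ r * ‖v‖} := by
  intro r
  obtain ⟨y, hy_pos, hy_sum⟩ :=
    exists_pos_sum_smul_eq_zero (eq_zero_of_forall_nonneg_of_isBounded hbdd hne)
  have hyL : y ∈ L := (hL y).2 hy_sum
  refine isCompact_of_isClosed_isBounded ?_ ?_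
  · simp only [Set.ofPred_forall]
    exact isClosed_iInter fun v => isClosed_iInter fun _ => isClosed_le (by fun_prop) (by fun_prop)
  · refine (isBounded_setOf_sum_mul_norm_sq_le hy_pos (2 * (r * ‖y‖ - ∑ i, lam i * y i))).subset
      fun z hz => ?_
    have hsplit : ∑ i, ((1 / 2 : ℝ) * ‖z i‖ ^ 2 + lam i) * y i
        = (1 / 2) * ∑ i, y i * ‖z i‖ ^ 2 + ∑ i, lam i * y i := by
      rw [Finset.mul_sum, ← Finset.sum_add_distrib]
      exact Finset.sum_congr rfl fun i _ => by ring
    have hpair := (le_abs_self _).trans (hz y hyL)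
    rw [Set.mem_ofPred_eq]
    linarith
end

section
/- Let L_ℝ ⊂ ℝ^p be a linear subspace acting on ℂ^p by v · z = (e^{v_1}z_1, …, e^{v_p}z_p). Let J_A : ℂ^p → L_ℝ^* be given by ⟨J_A(z), v⟩ = Σ_i ((1/2)|z_i|² + λ_i) v_i for v ∈ L_ℝ, where λ ∈ ℝ^p is fixed. If z and v·z both lie in J_A^{-1}(0) for some v ∈ L_ℝ, then v·z = z. -/
/-!
Pair both moment-map equations with `v` itself and subtract: the constants `λ_i` cancel and
`∑ i, |z_i|² (e^{2 v_i} - 1) v_i = 0`. Since `t ↦ e^{2t}` is strictly increasing, every summand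
is nonnegative and vanishes only if `z_i = 0` or `v_i = 0`; either way `e^{v_i} z_i = z_i`.
-/

open Finset

theorem StrictMono.sub_map_zero_mul_pos {R : Type*} [Ring R] [LinearOrder R]
    [IsStrictOrderedRing R] {f : R → R} (hf : StrictMono f) {t : R} (ht : t ≠ 0) :
    0 < (f t - f 0) * t := by
  rcases ht.lt_or_gt with h | h
  · exact mul_pos_of_neg_of_neg (sub_neg.2 (hf h)) h
  · exact mul_pos (sub_pos.2 (hf h)) h

theorem StrictMono.eq_zero_or_eq_zero_of_sum_mul_sub_map_zero_mul_eq_zero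
    {R ι : Type*} [Ring R] [LinearOrder R] [IsStrictOrderedRing R] [Fintype ι]
    {f : R → R} (hf : StrictMono f) {c v : ι → R} (hc : ∀ i, 0 ≤ c i)
    (hsum : ∑ i, c i * ((f (v i) - f 0) * v i) = 0) (i : ι) : c i = 0 ∨ v i = 0 := by
  have hnonneg : ∀ j ∈ univ, 0 ≤ c j * ((f (v j) - f 0) * v j) := fun j _ => by
    rcases eq_or_ne (v j) 0 with h | h
    · simp [h]
    · exact mul_nonneg (hc j) (hf.sub_map_zero_mul_pos h).le
  have hi := (sum_eq_zero_iff_of_nonneg hnonneg).1 hsum i (mem_univ i)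
  refine (mul_eq_zero.1 hi).imp id fun h => ?_
  by_contra hv
  exact (hf.sub_map_zero_mul_pos hv).ne' h

theorem Complex.norm_ofReal_exp_mul_sq (t : ℝ) (w : ℂ) :
    ‖(Real.exp t : ℂ) * w‖ ^ 2 = Real.exp (2 * t) * ‖w‖ ^ 2 := by
  rw [norm_mul, Complex.norm_real, Real.norm_of_nonneg (Real.exp_pos t).le, mul_pow,
    ← Real.exp_nat_mul]
  norm_num

/-- Transversality: Let `L_ℝ ⊂ ℝ^p` act on `ℂ^p` by
`v · z = (e^{v_1} z_1, …, e^{v_p} z_p)`, and let `J_A : ℂ^p → L_ℝ^*` be given by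
`⟨J_A(z), v⟩ = Σ_i ((1/2)|z_i|² + λ_i) v_i`.  If `z` and `v · z` both lie in
`J_A^{-1}(0)` for some `v ∈ L_ℝ`, then `v · z = z`. -/
theorem transversality
    (p : ℕ) (lam : Fin p → ℝ)
    (L : Submodule ℝ (Fin p → ℝ))
    (v : Fin p → ℝ) (hv : v ∈ L)
    (z : Fin p → ℂ)
    (h1 : ∀ w ∈ L, ∑ i, ((1 / 2 : ℝ) * ‖z i‖ ^ 2 + lam i) * w i = 0)
    (h2 : ∀ w ∈ L, ∑ i, ((1 / 2 : ℝ) * ‖(Real.exp (v i) : ℂ) * z i‖ ^ 2 + lam i) * w i = 0) :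
    (fun i => (Real.exp (v i) : ℂ) * z i) = z := by
  set f : ℝ → ℝ := fun t => Real.exp (2 * t)
  have hf : StrictMono f := Real.exp_strictMono.comp (strictMono_mul_left_of_pos two_pos)
  have hsum : ∑ i, ‖z i‖ ^ 2 * ((f (v i) - f 0) * v i) = 0 := by
    calc ∑ i, ‖z i‖ ^ 2 * ((f (v i) - f 0) * v i)
        = 2 * (∑ i, ((1 / 2 : ℝ) * ‖(Real.exp (v i) : ℂ) * z i‖ ^ 2 + lam i) * v i
            - ∑ i, ((1 / 2 : ℝ) * ‖z i‖ ^ 2 + lam i) * v i) := by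
          rw [← sum_sub_distrib, mul_sum]
          refine sum_congr rfl fun i _ => ?_
          simp only [f, Complex.norm_ofReal_exp_mul_sq, mul_zero, Real.exp_zero]
          ring
      _ = 0 := by rw [h1 v hv, h2 v hv]; ring
  funext i
  rcases hf.eq_zero_or_eq_zero_of_sum_mul_sub_map_zero_mul_eq_zero (fun j => by positivity)
    hsum i with hz | hvi
  · simp [norm_eq_zero.1 (pow_eq_zero_iff two_ne_zero |>.1 hz)]
  · simp [hvi]
end

section
/- Let u_1,…,u_p ∈ ℤ^n with π : ℤ^p → ℤ^n, e_i ↦ u_i, and L_ℂ = ker(π ⊗ ℂ) ⊂ ℂ^p, L = ker π ∩ ℤ^p. Fix an index set I ⊂ {1,…,p} and let σ^⊥ = ∩_{i∈I} u_i^⊥ in (ℝ^n)^*, R = σ^⊥ ∩ Π^* where Π = π(ℤ^p). Suppose z ∈ (ℂ^×)^{I^c} (i.e., z_i = 0 iff i ∈ I) satisfies ∏_{j∉I} z_j^{⟨x,u_j⟩} = 1 for all x ∈ R. Then there exists v ∈ L_ℂ such that z_j = e^{2πi v_j} for all j ∉ I. -/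
/-!
Put `w_j = log z_j / 2πi` and, for a ring `F`, let `S_F = L_F + F^I ⊆ F^p` be the coefficient
vectors `c` with `∑ c_j u_j ∈ span (u_i)_{i ∈ I}`. It suffices to show `w ∈ ℤ^p + S_ℂ`.
The lattice `ℤ^p ∩ S_ℚ` is saturated, so `ℤ^p / (ℤ^p ∩ S_ℚ)` is free and `ℤ^p ∩ S_ℚ` is a
direct summand: some integer matrix `M` vanishes on it while `1 - M` maps `ℤ^p` into it.
A row of `M` is an integer functional vanishing on `S_ℚ`, hence of the form `j ↦ ⟨x, u_j⟩` with
`x ∈ R`, so the hypothesis makes `M w` integral; and `w - M w ∈ S_ℂ`.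
-/

open Matrix

theorem Submodule.exists_le_ker_and_forall_sub_mem {R M : Type*} [CommRing R] [IsDomain R]
    [IsPrincipalIdealRing R] [AddCommGroup M] [Module R M] [Module.Finite R M]
    (K : Submodule R M) [Module.IsTorsionFree R (M ⧸ K)] :
    ∃ P : M →ₗ[R] M, K ≤ LinearMap.ker P ∧ ∀ x, x - P x ∈ K := by
  obtain ⟨s, hs⟩ := Module.projective_lifting_property K.mkQ LinearMap.id K.mkQ_surjective
  refine ⟨s ∘ₗ K.mkQ, fun x hx => ?_, fun x => ?_⟩
  · simp [(Submodule.Quotient.mk_eq_zero K).2 hx]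
  · rw [← Submodule.Quotient.mk_eq_zero, ← K.mkQ_apply, map_sub]
    simpa using sub_eq_zero.2 (LinearMap.congr_fun hs (K.mkQ x)).symm

theorem Submodule.isTorsionFree_quotient_comap_restrictScalars {M V : Type*} [AddCommGroup M]
    [AddCommGroup V] [Module ℚ V] (f : M →ₗ[ℤ] V) (Q : Submodule ℚ V) :
    Module.IsTorsionFree ℤ (M ⧸ (Q.restrictScalars ℤ).comap f) := by
  refine .of_smul_eq_zero fun r x hx => ?_
  induction x using Submodule.Quotient.induction_on with | H x => ?_
  rw [or_iff_not_imp_left]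
  intro hr
  rw [← Submodule.Quotient.mk_smul, Submodule.Quotient.mk_eq_zero] at hx
  rw [Submodule.Quotient.mk_eq_zero]
  have hx : (r : ℚ) • f x ∈ Q := by simpa [Int.cast_smul_eq_zsmul] using hx
  simpa [smul_smul, hr] using Q.smul_mem (r : ℚ)⁻¹ hx

theorem Matrix.exists_mulVec_eq_of_forall_vecMul_eq_zero {ι κ K : Type*} [Fintype ι] [Fintype κ]
    [DecidableEq ι] [DecidableEq κ] [Field K] (A : Matrix ι κ K) {m : ι → K}
    (hm : ∀ c, c ᵥ* A = 0 → m ⬝ᵥ c = 0) : ∃ y, A *ᵥ y = m := by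
  have hmem : dotProductEquiv K ι m ∈ (LinearMap.ker A.vecMulLinear).dualAnnihilator :=
    (Submodule.mem_dualAnnihilator _).2 fun c hc => hm c hc
  rw [← LinearMap.range_dualMap_eq_dualAnnihilator_ker] at hmem
  obtain ⟨ψ, hψ⟩ := hmem
  set y := (dotProductEquiv K κ).symm ψ
  have hy : ∀ t, ψ t = y ⬝ᵥ t := fun t => by
    rw [← (dotProductEquiv K κ).apply_symm_apply ψ]; rfl
  refine ⟨y, (dotProductEquiv K ι).injective (LinearMap.ext fun c => ?_)⟩
  rw [← hψ]
  simp [hy, dotProduct_mulVec, dotProduct_comm]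

theorem dotProduct_eq_zero_of_forall_intCast_mem {ι : Type*} [Fintype ι]
    {Q : Submodule ℚ (ι → ℚ)} {m : ι → ℤ} (hm : ∀ a : ι → ℤ, Int.cast ∘ a ∈ Q → m ⬝ᵥ a = 0)
    {c : ι → ℚ} (hc : c ∈ Q) : (Int.cast ∘ m) ⬝ᵥ c = 0 := by
  obtain ⟨d, hd⟩ := IsLocalization.exist_integer_multiples_of_finite (nonZeroDivisors ℤ) c
  choose a ha using hd
  have hac : Int.cast ∘ a = ((d : ℤ) : ℚ) • c := funext fun i => by simpa using ha i
  have h0 := congrArg (Int.castRingHom ℚ) (hm a (hac ▸ Q.smul_mem _ hc))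
  rw [RingHom.map_dotProduct, map_zero] at h0
  simpa [hac, nonZeroDivisors.coe_ne_zero d] using h0

theorem Complex.exists_sum_mul_log_eq_of_prod_zpow_eq_one {ι : Type*} [Fintype ι] {z : ι → ℂ}
    {m : ι → ℤ} (hm : ∀ j, z j = 0 → m j = 0) (h : ∏ j, z j ^ m j = 1) :
    ∃ N : ℤ, ∑ j, m j * log (z j) = N * (2 * Real.pi * I) := by
  have hexp : ∀ j, z j ^ m j = exp (m j * log (z j)) := fun j => by
    by_cases hz : z j = 0
    · simp [hz, hm j hz]
    · rw [exp_int_mul, exp_log hz]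
  rw [Finset.prod_congr rfl fun j _ => hexp j, ← exp_sum] at h
  exact exp_eq_one_iff.1 h

section RelationsModSpan

variable {ι κ : Type*} [Fintype ι] {U : Matrix ι κ ℤ} {I : Set ι}

variable (U I) in
/-- `L_R + R^I`, where `L_R` is the kernel of `c ↦ ∑ c_j u_j` for the rows `u_j` of `U`. -/
def relationsModSpan (R : Type*) [CommRing R] : Submodule R (ι → R) :=
  LinearMap.ker (U.map (Int.cast : ℤ → R)).vecMulLinear ⊔ Submodule.pi Iᶜ fun _ => ⊥

theorem comp_mem_relationsModSpan {R S : Type*} [CommRing R] [CommRing S] (f : R →+* S)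
    {c : ι → R} (hc : c ∈ relationsModSpan U I R) : f ∘ c ∈ relationsModSpan U I S := by
  obtain ⟨a, ha, b, hb, rfl⟩ := Submodule.mem_sup.1 hc
  refine Submodule.mem_sup.2 ⟨f ∘ a, ?_, f ∘ b, fun i hi => ?_, by ext; simp⟩
  · have hmap : (U.map (Int.cast : ℤ → R)).map f = U.map Int.cast := by ext; simp
    have ha : a ᵥ* U.map Int.cast = 0 := ha
    ext k
    simpa [hmap, ha] using (RingHom.map_vecMul f (U.map Int.cast) a k).symm
  · simp [(Submodule.mem_bot R).1 (hb i hi)]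

variable (U I) in
theorem exists_intMatrix_rows_orthogonal_and_sub_mulVec_mem [DecidableEq ι] :
    ∃ M : Matrix ι ι ℤ,
      (∀ i a, Int.cast ∘ a ∈ relationsModSpan U I ℚ → M i ⬝ᵥ a = 0) ∧
      ∀ a, Int.cast ∘ (a - M *ᵥ a) ∈ relationsModSpan U I ℚ := by
  let f : (ι → ℤ) →ₗ[ℤ] (ι → ℚ) := LinearMap.compLeft (Algebra.linearMap ℤ ℚ) ι
  have := Submodule.isTorsionFree_quotient_comap_restrictScalars f (relationsModSpan U I ℚ)
  obtain ⟨P, hPK, hP⟩ :=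
    (((relationsModSpan U I ℚ).restrictScalars ℤ).comap f).exists_le_ker_and_forall_sub_mem
  refine ⟨LinearMap.toMatrix' P, fun i a ha => ?_, fun a => ?_⟩
  · have h := congrFun (LinearMap.toMatrix'_mulVec P a) i
    rwa [LinearMap.mem_ker.1 (hPK ha)] at h
  · rw [LinearMap.toMatrix'_mulVec]
    exact hP a

theorem forall_mem_eq_zero_and_exists_mulVec_eq_of_orthogonal [DecidableEq ι] [Fintype κ]
    [DecidableEq κ] {m : ι → ℤ}
    (hm : ∀ a : ι → ℤ, Int.cast ∘ a ∈ relationsModSpan U I ℚ → m ⬝ᵥ a = 0) :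
    (∀ i ∈ I, m i = 0) ∧ ∃ x : κ → ℝ, U.map Int.cast *ᵥ x = Int.cast ∘ m := by
  refine ⟨fun i hi => ?_, ?_⟩
  · have hsingle : Int.cast ∘ Pi.single i 1 ∈ relationsModSpan U I ℚ := by
      refine Submodule.mem_sup_right fun j hj => ?_
      simp [show j ≠ i from fun h => hj (h ▸ hi)]
    simpa using hm _ hsingle
  · obtain ⟨y, hy⟩ := (U.map (Int.cast : ℤ → ℚ)).exists_mulVec_eq_of_forall_vecMul_eq_zero
      fun c hc => dotProduct_eq_zero_of_forall_intCast_mem hm (Submodule.mem_sup_left hc)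
    refine ⟨Rat.cast ∘ y, funext fun j => ?_⟩
    have := RingHom.map_mulVec (Rat.castHom ℝ) (U.map Int.cast) y j
    simp_all [Function.comp_def]

theorem sub_mulVec_mem_relationsModSpan {M : Matrix ι ι ℤ}
    (hM : ∀ a : ι → ℤ, Int.cast ∘ (a - M *ᵥ a) ∈ relationsModSpan U I ℚ) (w : ι → ℂ) :
    w - M.map Int.cast *ᵥ w ∈ relationsModSpan U I ℂ := by
  classical
  have hcol : ∀ j, Int.cast ∘ (Pi.single j 1 - M *ᵥ Pi.single j 1) ∈ relationsModSpan U I ℂ :=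
    fun j => by
      simpa [Function.comp_def] using comp_mem_relationsModSpan (Rat.castHom ℂ) (hM (Pi.single j 1))
  have hsum : w - M.map Int.cast *ᵥ w =
      ∑ j, w j • (Int.cast ∘ (Pi.single j 1 - M *ᵥ Pi.single j 1) : ι → ℂ) := by
    ext i
    simp [mulVec, dotProduct, Pi.single_apply, mul_comm, mul_sub, Finset.sum_sub_distrib]
  rw [hsum]
  exact Submodule.sum_mem _ fun j _ => Submodule.smul_mem _ _ (hcol j)

end RelationsModSpan

/-- Let `u_1,…,u_p ∈ ℤ^n`, `I ⊆ {1,…,p}`, and `z ∈ ℂ^p` with `z_i = 0 ⟺ i ∈ I`.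
If `∏_j z_j^{⟨x,u_j⟩} = 1` for every `x ∈ R = {x ∈ Π^* : ⟨x,u_i⟩ = 0 ∀ i ∈ I}` (membership
`x ∈ Π^*` being witnessed by the integrality of all pairings `⟨x,u_j⟩ = m_j ∈ ℤ`, since
`Π = π(ℤ^p)` is generated by the `u_j`), then there is `v ∈ L_ℂ = ker(π ⊗ ℂ)` with
`z_j = e^{2πi v_j}` for all `j ∉ I`. -/
theorem monomial_fiber_over_one
    {p n : ℕ} (u : Fin p → (Fin n → ℤ)) (I : Finset (Fin p))
    (z : Fin p → ℂ)
    (hz : ∀ i, z i = 0 ↔ i ∈ I)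
    (hmon : ∀ (x : Fin n → ℝ) (m : Fin p → ℤ),
      (∀ j, ∑ k, x k * (u j k : ℝ) = (m j : ℝ)) →
      (∀ i ∈ I, m i = 0) →
      ∏ j, z j ^ (m j) = 1) :
    ∃ v : Fin p → ℂ,
      (∀ k, ∑ j, v j * (u j k : ℂ) = 0) ∧
      ∀ j ∉ I, z j = Complex.exp (2 * Real.pi * Complex.I * v j) := by
  set U : Matrix (Fin p) (Fin n) ℤ := Matrix.of u
  obtain ⟨M, hrows, hM⟩ := exists_intMatrix_rows_orthogonal_and_sub_mulVec_mem U I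
  have hrow : ∀ i, ∃ N : ℤ, ∑ j, M i j * Complex.log (z j) = N * (2 * Real.pi * Complex.I) := by
    intro i
    obtain ⟨hI, x, hx⟩ := forall_mem_eq_zero_and_exists_mulVec_eq_of_orthogonal (hrows i)
    refine Complex.exists_sum_mul_log_eq_of_prod_zpow_eq_one (fun j hj => hI j ((hz j).1 hj))
      (hmon x (M i) (fun j => ?_) hI)
    simpa [U, mulVec, dotProduct, mul_comm] using congrFun hx j
  choose N hN using hrow
  set w : Fin p → ℂ := fun j => Complex.log (z j) / (2 * Real.pi * Complex.I)
  have hwN : M.map Int.cast *ᵥ w = Int.cast ∘ N := funext fun i => by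
    simp [w, mulVec, dotProduct, mul_div_assoc', ← Finset.sum_div, hN]
  obtain ⟨v, hv, a, ha, hva⟩ := Submodule.mem_sup.1 (sub_mulVec_mem_relationsModSpan hM w)
  refine ⟨v, fun k => congrFun hv k, fun j hj => ?_⟩
  have hvj : v j = w j - N j := by
    have h := congrFun hva j
    rwa [Pi.add_apply, (Submodule.mem_bot ℂ).1 (ha j hj), add_zero, Pi.sub_apply, hwN] at h
  rw [hvj, mul_sub, Complex.exp_sub, mul_div_cancel₀ _ Complex.two_pi_I_ne_zero,
    Complex.exp_log fun h => hj ((hz j).1 h), mul_comm, Complex.exp_int_mul_two_pi_mul_I, div_one]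
end

section
/- Let u_1,…,u_p span ℝ^n, let π : ℝ^p → ℝ^n with π(e_i)=u_i, L = ker π ∩ ℤ^p spanning L_ℝ = ker π, and suppose the polytope Δ = {x : ⟨x,u_i⟩ ≥ λ_i} has nonempty interior. Then there exists z ∈ (ℂ^×)^p with (ι^*∘J_G)(z) = 0, where J_G(z) = (1/2)(|z_1|²,…,|z_p|²) + λ and ι^* is restriction to L_ℝ. Moreover the zero set (ι^*∘J_G)^{-1}(0) ⊂ ℂ^p has dimension p + n as a real set (it contains a smooth open subset of dimension p+n and is contained in no larger dimension). -/
/-!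
By the Fredholm alternative, `z` lies in the zero set iff `(|z_i|²)_i` lies in the affine subspace
`A = -2λ + range M` of `ℝ^p`, where `M x = (⟨x, u_i⟩)_i` has rank `n`. Writing `z_i = √r_i e^{iθ_i}`,
each stratum of `{z | (|z_i|²)_i ∈ A}` on which a fixed set of coordinates vanishes is the image of a
convex subset of `A.direction × ℝ^p` under a `C¹` map, so the Hausdorff dimension is at most
`n + p`. The interior point of `Δ` gives a point `y ∈ A` with all `y_i > 0`; near it the chart has
the `C¹` left inverse `z ↦ (|z|² - y, arg z)` on the product of right half-planes, which gives the
reverse inequality and a zero with all coordinates nonzero.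
-/

open Set Module Complex
open scoped Real Topology ENNReal

namespace Matrix

variable {ι κ 𝕜 : Type*} [Fintype ι] [Fintype κ] [Field 𝕜] [LinearOrder 𝕜] [IsStrictOrderedRing 𝕜]

theorem disjoint_range_mulVecLin_ker_vecMulLinear (A : Matrix ι κ 𝕜) :
    Disjoint (LinearMap.range A.mulVecLin) (LinearMap.ker A.vecMulLinear) := by
  rw [Submodule.disjoint_def]
  rintro _ ⟨x, rfl⟩ hy
  rw [LinearMap.mem_ker, vecMulLinear_apply, mulVecLin_apply] at hy
  have : A *ᵥ x ⬝ᵥ A *ᵥ x = 0 := by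
    rw [dotProduct_mulVec, hy, zero_dotProduct]
  exact dotProduct_self_eq_zero.1 this

theorem range_mulVecLin_sup_ker_vecMulLinear (A : Matrix ι κ 𝕜) :
    LinearMap.range A.mulVecLin ⊔ LinearMap.ker A.vecMulLinear = ⊤ := by
  refine Submodule.eq_top_of_disjoint _ _ ?_ (disjoint_range_mulVecLin_ker_vecMulLinear A)
  have := LinearMap.finrank_range_add_finrank_ker A.vecMulLinear
  rw [← mulVecLin_transpose, ← rank, rank_transpose, mulVecLin_transpose] at this
  rw [← this, rank]

theorem mem_range_mulVecLin_iff (A : Matrix ι κ 𝕜) (w : ι → 𝕜) :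
    w ∈ LinearMap.range A.mulVecLin ↔ ∀ v, v ᵥ* A = 0 → w ⬝ᵥ v = 0 := by
  constructor
  · rintro ⟨x, rfl⟩ v hv
    rw [mulVecLin_apply, dotProduct_comm, dotProduct_mulVec, hv, zero_dotProduct]
  · intro hw
    obtain ⟨r, ⟨x, rfl⟩, k, hk, rfl⟩ := Submodule.mem_sup.1
      (range_mulVecLin_sup_ker_vecMulLinear A ▸ Submodule.mem_top (x := w))
    rw [LinearMap.mem_ker, vecMulLinear_apply] at hk
    have hkk : k ⬝ᵥ k = 0 := by
      have := hw k hk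
      rwa [add_dotProduct, mulVecLin_apply, dotProduct_comm, dotProduct_mulVec, hk,
        zero_dotProduct, zero_add] at this
    rw [dotProduct_self_eq_zero.1 hkk, add_zero]
    exact LinearMap.mem_range_self _ _

end Matrix

namespace Complex

@[fun_prop]
theorem contDiffAt_ofReal {n : WithTop ℕ∞} {x : ℝ} : ContDiffAt ℝ n (fun x : ℝ => (x : ℂ)) x :=
  ofRealCLM.contDiff.contDiffAt

theorem contDiffAt_arg {z : ℂ} (hz : z ∈ slitPlane) : ContDiffAt ℝ 1 arg z := by
  have : arg = fun z => (log z).im := funext fun z => (log_im z).symm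
  rw [this]
  exact imCLM.contDiff.contDiffAt.comp z ((contDiffAt_log hz).restrict_scalars ℝ)

theorem norm_sqrt_mul_exp_mul_I_sq {r : ℝ} (hr : 0 ≤ r) (θ : ℝ) :
    ‖(√r : ℂ) * exp (θ * I)‖ ^ 2 = r := by
  rw [norm_mul, norm_exp_ofReal_mul_I, mul_one, norm_real,
    Real.norm_of_nonneg (Real.sqrt_nonneg r), Real.sq_sqrt hr]

theorem re_sqrt_mul_exp_mul_I_pos {r : ℝ} (hr : 0 < r) {θ : ℝ}
    (hθ : θ ∈ Ioo (-(π / 2)) (π / 2)) : 0 < ((√r : ℂ) * exp (θ * I)).re := by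
  rw [re_ofReal_mul, exp_ofReal_mul_I_re]
  exact mul_pos (Real.sqrt_pos.2 hr) (Real.cos_pos_of_mem_Ioo hθ)

theorem arg_sqrt_mul_exp_mul_I {r : ℝ} (hr : 0 < r) {θ : ℝ} (hθ : θ ∈ Ioc (-π) π) :
    arg ((√r : ℂ) * exp (θ * I)) = θ := by
  rw [exp_mul_I, arg_mul_cos_add_sin_mul_I (Real.sqrt_pos.2 hr) hθ]

end Complex

section PolarChart

variable {ι : Type*}

noncomputable def polarChart [DecidableEq ι] (T : Finset ι) (a : ι → ℝ)
    (q : (ι → ℝ) × (ι → ℝ)) : ι → ℂ :=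
  fun i => if i ∈ T then 0 else (√(a i + q.1 i) : ℂ) * exp (q.2 i * I)

def polarChartDomain (T : Finset ι) (a : ι → ℝ) : Set ((ι → ℝ) × (ι → ℝ)) :=
  {q | ∀ i ∉ T, 0 < a i + q.1 i}

theorem convex_polarChartDomain (T : Finset ι) (a : ι → ℝ) :
    Convex ℝ (polarChartDomain T a) := by
  refine fun q hq q' hq' s t hs ht hst i hi => ?_
  have := convex_Ioi (0 : ℝ) (hq i hi) (hq' i hi) hs ht hst
  simp only [mem_Ioi, smul_eq_mul] at this
  simp only [Prod.fst_add, Prod.smul_fst, Pi.add_apply, Pi.smul_apply, smul_eq_mul]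
  linear_combination this + a i * hst

variable [Fintype ι]

theorem contDiffOn_polarChart [DecidableEq ι] (T : Finset ι) (a : ι → ℝ) :
    ContDiffOn ℝ 1 (polarChart T a) (polarChartDomain T a) := by
  refine contDiffOn_pi.2 fun i q hq => ?_
  unfold polarChart
  split_ifs with hi
  · exact contDiffWithinAt_const
  · have h := hq i hi
    exact ContDiffAt.contDiffWithinAt (by fun_prop (disch := exact h.ne'))

def prodSubtypeL (V : Submodule ℝ (ι → ℝ)) : V × (ι → ℝ) →L[ℝ] (ι → ℝ) × (ι → ℝ) :=
  V.subtypeL.prodMap (ContinuousLinearMap.id ℝ _)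

theorem isometry_prodSubtypeL (V : Submodule ℝ (ι → ℝ)) : Isometry (prodSubtypeL V) :=
  isometry_subtype_coe.prodMap isometry_id

end PolarChart

section NormSqPreimage

variable {ι : Type*}

def normSqPreimage (A : AffineSubspace ℝ (ι → ℝ)) : Set (ι → ℂ) := {z | (fun i => ‖z i‖ ^ 2) ∈ A}

theorem exists_mem_normSqPreimage_forall_ne_zero (A : AffineSubspace ℝ (ι → ℝ)) {y : ι → ℝ}
    (hy : y ∈ A) (hpos : ∀ i, 0 < y i) :
    ∃ z ∈ normSqPreimage A, ∀ i, z i ≠ 0 := by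
  refine ⟨fun i => (√(y i) : ℂ), ?_, fun i => ?_⟩
  · show (fun i => ‖(√(y i) : ℂ)‖ ^ 2) ∈ A
    convert hy using 1
    funext i
    rw [norm_real, Real.norm_of_nonneg (Real.sqrt_nonneg _), Real.sq_sqrt (hpos i).le]
  · exact ofReal_ne_zero.2 (Real.sqrt_pos.2 (hpos i)).ne'

variable [Fintype ι]

theorem normSqPreimage_subset_iUnion [DecidableEq ι] (A : AffineSubspace ℝ (ι → ℝ))
    {a : ι → ℝ} (ha : a ∈ A) :
    normSqPreimage A ⊆ ⋃ T : Finset ι,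
      (polarChart T a ∘ prodSubtypeL A.direction) ''
        (prodSubtypeL A.direction ⁻¹' polarChartDomain T a) := by
  intro z hz
  refine mem_iUnion.2 ⟨Finset.univ.filter (z · = 0),
    (⟨_, AffineSubspace.vsub_mem_direction hz ha⟩, fun i => arg (z i)), fun i hi => ?_, ?_⟩
  · show 0 < a i + (‖z i‖ ^ 2 - a i)
    rw [add_sub_cancel]
    exact pow_pos (norm_pos_iff.2 (by simpa using hi)) 2
  · funext i
    by_cases hi : z i = 0
    · simp [polarChart, hi]
    · simp [polarChart, prodSubtypeL, hi, norm_mul_exp_arg_mul_I]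

theorem dimH_normSqPreimage_le (A : AffineSubspace ℝ (ι → ℝ)) :
    dimH (normSqPreimage A) ≤ finrank ℝ A.direction + Fintype.card ι := by
  classical
  obtain hA | ⟨a, ha⟩ := (A : Set (ι → ℝ)).eq_empty_or_nonempty
  · have : normSqPreimage A = ∅ := eq_empty_of_forall_notMem fun z (hz : _ ∈ A) => by
      rwa [← SetLike.mem_coe, hA] at hz
    simp [this]
  refine (dimH_mono (normSqPreimage_subset_iUnion A ha)).trans ?_
  rw [dimH_iUnion]
  refine iSup_le fun T => ?_
  set L := prodSubtypeL A.direction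
  calc dimH ((polarChart T a ∘ L) '' (L ⁻¹' polarChartDomain T a))
      ≤ dimH (L ⁻¹' polarChartDomain T a) :=
        ((contDiffOn_polarChart T a).comp_continuousLinearMap L).dimH_image_le
          ((convex_polarChartDomain T a).linear_preimage L.toLinearMap) Subset.rfl
    _ ≤ dimH (univ : Set (A.direction × (ι → ℝ))) := dimH_mono (subset_univ _)
    _ = finrank ℝ A.direction + Fintype.card ι := by
        rw [Real.dimH_univ_eq_finrank, Module.finrank_prod, Module.finrank_fintype_fun_eq_card]
        push_cast; rfl

theorem le_dimH_normSqPreimage (A : AffineSubspace ℝ (ι → ℝ)) {y : ι → ℝ} (hy : y ∈ A)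
    (hpos : ∀ i, 0 < y i) :
    finrank ℝ A.direction + Fintype.card ι ≤ dimH (normSqPreimage A) := by
  classical
  set L := prodSubtypeL A.direction
  set f := polarChart ∅ y
  -- `|θ_i| < π / 2` keeps the chart inside `H`, a convex set on which `arg` is `C¹`.
  set U : Set (A.direction × (ι → ℝ)) :=
    L ⁻¹' {q | ∀ i, 0 < y i + q.1 i ∧ q.2 i ∈ Ioo (-(π / 2)) (π / 2)}
  set H : Set (ι → ℂ) := univ.pi fun _ => {w : ℂ | 0 < w.re}
  set g : (ι → ℂ) → (ι → ℝ) × (ι → ℝ) := fun z => (fun i => ‖z i‖ ^ 2 - y i, fun i => arg (z i))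
  have hU : U ∈ 𝓝 0 := by
    refine (IsOpen.preimage L.continuous ?_).mem_nhds ?_
    · simp only [ofPred_forall]
      refine isOpen_iInter_of_finite fun i => ?_
      have h₁ : Continuous fun q : (ι → ℝ) × (ι → ℝ) => y i + q.1 i := by fun_prop
      have h₂ : Continuous fun q : (ι → ℝ) × (ι → ℝ) => q.2 i := by fun_prop
      exact (isOpen_lt continuous_const h₁).and (isOpen_Ioo.preimage h₂)
    · simp [L, prodSubtypeL, hpos, Real.pi_pos]
  have hf : ∀ q, ∀ i, f (L q) i = (√(y i + (L q).1 i) : ℂ) * exp ((L q).2 i * I) := by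
    simp [f, polarChart]
  have hfA : (f ∘ L) '' U ⊆ normSqPreimage A := by
    rintro _ ⟨q, hq, rfl⟩
    have : (fun i => ‖(f ∘ L) q i‖ ^ 2) = (L q).1 +ᵥ y := funext fun i => by
      rw [Function.comp_apply, hf, norm_sqrt_mul_exp_mul_I_sq (hq i).1.le, vadd_eq_add,
        Pi.add_apply, add_comm]
    show _ ∈ A
    rw [this]
    exact AffineSubspace.vadd_mem_of_mem_direction q.1.2 hy
  have hfH : (f ∘ L) '' U ⊆ H := by
    rintro _ ⟨q, hq, rfl⟩ i -
    rw [Function.comp_apply, hf]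
    exact re_sqrt_mul_exp_mul_I_pos (hq i).1 (hq i).2
  have hgf : EqOn (g ∘ (f ∘ L)) L U := by
    intro q hq
    refine Prod.ext (funext fun i => ?_) (funext fun i => ?_)
    · simp only [g, Function.comp_apply, hf, norm_sqrt_mul_exp_mul_I_sq (hq i).1.le]
      ring
    · simp only [g, Function.comp_apply, hf]
      exact arg_sqrt_mul_exp_mul_I (hq i).1
        ⟨by linarith [(hq i).2.1, Real.pi_pos], by linarith [(hq i).2.2, Real.pi_pos]⟩
  have hg : ContDiffOn ℝ 1 g H := by
    refine ContDiffOn.prodMk (contDiff_pi.2 fun i => ?_).contDiffOn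
      (contDiffOn_pi.2 fun i z hz => ?_)
    · exact ((contDiff_norm_sq ℝ).comp (contDiff_apply ℝ ℂ i)).sub contDiff_const
    · exact ((contDiffAt_arg (Or.inl (hz i trivial))).comp z
        (contDiff_apply ℝ ℂ i).contDiffAt).contDiffWithinAt
  calc (finrank ℝ A.direction + Fintype.card ι : ℝ≥0∞) = dimH U := by
        rw [Real.dimH_of_mem_nhds hU, Module.finrank_prod, Module.finrank_fintype_fun_eq_card]
        push_cast; rfl
    _ = dimH (g '' ((f ∘ L) '' U)) := by
        rw [← image_comp, hgf.image_eq, (isometry_prodSubtypeL _).dimH_image]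
    _ ≤ dimH ((f ∘ L) '' U) :=
        hg.dimH_image_le (convex_pi fun _ _ => convex_halfSpace_re_gt 0) hfH
    _ ≤ _ := dimH_mono hfA

theorem dimH_normSqPreimage_eq (A : AffineSubspace ℝ (ι → ℝ)) {y : ι → ℝ} (hy : y ∈ A)
    (hpos : ∀ i, 0 < y i) :
    dimH (normSqPreimage A) = finrank ℝ A.direction + Fintype.card ι :=
  (dimH_normSqPreimage_le A).antisymm (le_dimH_normSqPreimage A hy hpos)

end NormSqPreimage

theorem forall_relation_iff_mem_normSqPreimage {ι κ : Type*} [Fintype ι] [Fintype κ]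
    (u : ι → κ → ℝ) (lam : ι → ℝ) (z : ι → ℂ) :
    (∀ v : ι → ℝ, ∑ i, v i • u i = 0 → ∑ i, ((1 / 2 : ℝ) * ‖z i‖ ^ 2 + lam i) * v i = 0) ↔
      z ∈ normSqPreimage
        (AffineSubspace.mk' (-(2 • lam)) (LinearMap.range (Matrix.of u).mulVecLin)) := by
  have : (fun i => ‖z i‖ ^ 2) -ᵥ -(2 • lam) = (2 : ℝ) • fun i => (1 / 2 : ℝ) * ‖z i‖ ^ 2 + lam i := by
    funext i
    simp only [vsub_eq_sub, Pi.sub_apply, Pi.neg_apply, Pi.smul_apply, smul_eq_mul]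
    ring
  rw [normSqPreimage, mem_ofPred_eq, AffineSubspace.mem_mk', this, Submodule.smul_mem_iff _ two_ne_zero,
    Matrix.mem_range_mulVecLin_iff]
  simp only [Matrix.vecMul_eq_sum, dotProduct]
  rfl

/-- If `u_1,…,u_p` span `ℝ^n` and the polytope `Δ = {x : ⟨x,u_i⟩ ≥ λ_i}` has
nonempty interior (witnessed by a point with all inequalities strict), then the zero set
`Z = (ι^* ∘ J_G)^{-1}(0) ⊂ ℂ^p` (where `J_G(z) = (1/2)(|z_1|²,…,|z_p|²) + λ` and `ι^*` is
restriction to `L_ℝ = ker π`) contains a point with all coordinates nonzero, and `Z` has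
real dimension `p + n` (expressed via Hausdorff dimension). -/
theorem zero_set_dimension
    {p n : ℕ} (u : Fin p → (Fin n → ℝ)) (lam : Fin p → ℝ)
    (hspan : Submodule.span ℝ (Set.range u) = ⊤)
    (hint : ∃ x : Fin n → ℝ, ∀ i, lam i < ∑ j, x j * u i j)
    (Z : Set (Fin p → ℂ))
    (hZ : Z = {z : Fin p → ℂ | ∀ v : Fin p → ℝ, (∑ i, v i • u i = 0) →
        ∑ i, ((1 / 2 : ℝ) * ‖z i‖ ^ 2 + lam i) * v i = 0}) :
    (∃ z ∈ Z, ∀ i, z i ≠ 0) ∧ dimH Z = (p + n : ℕ) := by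
  obtain ⟨x, hx⟩ := hint
  set A := AffineSubspace.mk' (-(2 • lam)) (LinearMap.range (Matrix.of u).mulVecLin)
  have hZA : Z = normSqPreimage A := by
    rw [hZ]
    exact Set.ext fun z => forall_relation_iff_mem_normSqPreimage u lam z
  have hrank : finrank ℝ A.direction = n := by
    rw [AffineSubspace.direction_mk', ← Matrix.rank, Matrix.rank_eq_finrank_span_row]
    show finrank ℝ (Submodule.span ℝ (range u)) = n
    rw [hspan, finrank_top, finrank_fin_fun]
  set y : Fin p → ℝ := fun i => 2 * (∑ j, x j * u i j - lam i)
  have hyA : y ∈ A := by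
    refine AffineSubspace.mem_mk'.2 ⟨2 • x, funext fun i => ?_⟩
    rw [Matrix.mulVecLin_apply, Matrix.mulVec_smul]
    simp only [Pi.smul_apply, Matrix.mulVec, dotProduct, Matrix.of_apply, y,
      vsub_eq_sub, Pi.sub_apply, Pi.neg_apply]
    simp only [mul_comm (u i _)]
    ring
  have hpos : ∀ i, 0 < y i := fun i => by linarith [hx i]
  rw [hZA]
  refine ⟨exists_mem_normSqPreimage_forall_ne_zero A hyA hpos, ?_⟩
  rw [dimH_normSqPreimage_eq A hyA hpos, hrank, Fintype.card_fin]
  push_cast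
  ring
end

section
/- Let T = N × B be a product of tori, and let S₁, S₂ be compact B-spaces with S₁/B contractible. Suppose φ : N × S₁ → N × S₂ is a T-equivariant homeomorphism, written φ(n, ν) = (n·f(ν), g(ν)) with f : S₁ → N and g : S₁ → S₂ continuous. Then f is B-invariant, g is B-equivariant, and there exists a homotopy φ_t : S₁ → N (t ∈ [0,1]) with φ_1 = f, φ_0 ≡ e, and each φ_t B-invariant. -/
/-!
Evaluating the equivariance of `φ` at `n = n' = 1` compares `φ (1, b • s)` with `φ (1, s)`
and yields `f (b • s) = f s` and `g (b • s) = b • g s`.  Being `B`-invariant, `f` descends to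
the contractible orbit space `S₁ / B`, where it is homotopic to any constant map into the
path-connected `N`; pulling that homotopy back along `S₁ → S₁ / B` keeps every stage invariant.
-/

open ContinuousMap

theorem ContinuousMap.homotopic_const_of_contractibleSpace {X Y : Type*} [TopologicalSpace X]
    [TopologicalSpace Y] [ContractibleSpace X] [PathConnectedSpace Y] (f : C(X, Y)) (y : Y) :
    (const X y).Homotopic f := by
  obtain ⟨c, hc⟩ := (id_nullhomotopic X).comp_right f
  exact (Homotopic.trans ⟨(PathConnectedSpace.somePath y c).toHomotopyConst⟩ hc.symm :)

theorem invariant_and_equivariant_of_map_mul_smul {N B S₁ S₂ : Type*} [MulOneClass N]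
    [SMul B S₁] [SMul B S₂] (φ : N × S₁ → N × S₂) (f : S₁ → N) (g : S₁ → S₂)
    (hφ : ∀ (n : N) (s : S₁), φ (n, s) = (n * f s, g s))
    (hequiv : ∀ (n' : N) (b : B) (n : N) (s : S₁),
      φ (n' * n, b • s) = (n' * (φ (n, s)).1, b • (φ (n, s)).2))
    (b : B) (s : S₁) :
    f (b • s) = f s ∧ g (b • s) = b • g s := by
  simpa only [one_mul, hφ, Prod.mk.injEq] using hequiv 1 b 1 s

theorem exists_invariant_homotopy_const_of_contractibleSpace_orbitRel {B S Y : Type*} [Group B]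
    [MulAction B S] [TopologicalSpace S] [TopologicalSpace Y]
    [ContractibleSpace (Quotient (MulAction.orbitRel B S))] [PathConnectedSpace Y]
    {f : S → Y} (hf : Continuous f) (hinv : ∀ (b : B) (s : S), f (b • s) = f s) (y : Y) :
    ∃ Φ : unitInterval × S → Y, Continuous Φ ∧
      (∀ s, Φ (1, s) = f s) ∧ (∀ s, Φ (0, s) = y) ∧
      (∀ (t : unitInterval) (b : B) (s : S), Φ (t, b • s) = Φ (t, s)) := by
  have hlift : ∀ a s : S, MulAction.orbitRel B S a s → f a = f s := by
    rintro a s ⟨b, rfl⟩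
    exact hinv b s
  let fbar : C(Quotient (MulAction.orbitRel B S), Y) :=
    ⟨Quotient.lift f hlift, hf.quotient_lift hlift⟩
  obtain ⟨H⟩ := homotopic_const_of_contractibleSpace fbar y
  refine ⟨fun p => H (p.1, Quotient.mk _ p.2),
    H.continuous.comp (continuous_fst.prodMk (continuous_quotient_mk'.comp continuous_snd)),
    fun s => H.apply_one _, fun s => H.apply_zero _, fun t b s => ?_⟩
  exact congrArg (fun q => H (t, q)) (Quotient.sound ⟨b, rfl⟩)

theorem equivariant_homotopy_extension_general
    {N B S₁ S₂ : Type*}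
    [TopologicalSpace N] [CommGroup N] [PathConnectedSpace N]
    [CommGroup B]
    [TopologicalSpace S₁] [MulAction B S₁]
    [TopologicalSpace S₂] [MulAction B S₂]
    (hcontr : ContractibleSpace (Quotient (MulAction.orbitRel B S₁)))
    (φ : (N × S₁) ≃ₜ (N × S₂))
    (f : S₁ → N) (g : S₁ → S₂) (hf : Continuous f)
    (hφ : ∀ (n : N) (s : S₁), φ (n, s) = (n * f s, g s))
    (hequiv : ∀ (n' : N) (b : B) (n : N) (s : S₁),
      φ (n' * n, b • s) = (n' * (φ (n, s)).1, b • (φ (n, s)).2)) :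
    (∀ (b : B) (s : S₁), f (b • s) = f s) ∧
    (∀ (b : B) (s : S₁), g (b • s) = b • g s) ∧
    (∃ Φ : unitInterval × S₁ → N, Continuous Φ ∧
      (∀ s, Φ (1, s) = f s) ∧ (∀ s, Φ (0, s) = 1) ∧
      (∀ (t : unitInterval) (b : B) (s : S₁), Φ (t, b • s) = Φ (t, s))) := by
  have key := invariant_and_equivariant_of_map_mul_smul φ f g hφ hequiv
  have hfB : ∀ (b : B) (s : S₁), f (b • s) = f s := fun b s => (key b s).1
  exact ⟨hfB, fun b s => (key b s).2,
    exists_invariant_homotopy_const_of_contractibleSpace_orbitRel hf hfB 1⟩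

/-- Let `T = N × B` be a product of tori, `S₁, S₂` compact `B`-spaces with
`S₁/B` contractible, and `φ : N × S₁ → N × S₂` a `T`-equivariant homeomorphism written as
`φ(n, ν) = (n · f(ν), g(ν))`.  Then `f` is `B`-invariant, `g` is `B`-equivariant, and there
is a homotopy `φ_t : S₁ → N` of `B`-invariant maps with `φ₁ = f` and `φ₀ ≡ e`. -/
theorem equivariant_homotopy_extension
    {N B S₁ S₂ : Type*}
    [TopologicalSpace N] [CommGroup N] [IsTopologicalGroup N] [CompactSpace N]
    [ConnectedSpace N] [PathConnectedSpace N]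
    [TopologicalSpace B] [CommGroup B] [IsTopologicalGroup B] [CompactSpace B]
    [ConnectedSpace B]
    [TopologicalSpace S₁] [CompactSpace S₁] [MulAction B S₁] [ContinuousSMul B S₁]
    [TopologicalSpace S₂] [CompactSpace S₂] [MulAction B S₂] [ContinuousSMul B S₂]
    (hcontr : ContractibleSpace (Quotient (MulAction.orbitRel B S₁)))
    (φ : (N × S₁) ≃ₜ (N × S₂))
    (f : S₁ → N) (g : S₁ → S₂) (hf : Continuous f) (hg : Continuous g)
    (hφ : ∀ (n : N) (s : S₁), φ (n, s) = (n * f s, g s))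
    (hequiv : ∀ (n' : N) (b : B) (n : N) (s : S₁),
      φ (n' * n, b • s) = (n' * (φ (n, s)).1, b • (φ (n, s)).2)) :
    (∀ (b : B) (s : S₁), f (b • s) = f s) ∧
    (∀ (b : B) (s : S₁), g (b • s) = b • g s) ∧
    (∃ Φ : unitInterval × S₁ → N, Continuous Φ ∧
      (∀ s, Φ (1, s) = f s) ∧ (∀ s, Φ (0, s) = 1) ∧
      (∀ (t : unitInterval) (b : B) (s : S₁), Φ (t, b • s) = Φ (t, s))) :=
  equivariant_homotopy_extension_general hcontr φ f g hf hφ hequiv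
end
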